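/- arXiv:2511.21198 — 2 statements merged into one kernel-verified Lean document; each statement's English description precedes it below -/
import Mathlib

section
/- For all δ ∈ (0,1), with s_k and q_k as above, one has q_0 + q_2 < 0, i.e. -(1/2)^δ + s_1 - s_2 < 0 where s_1 = (3/2)^δ - 2(1/2)^δ and s_2 = (5/2)^δ - 2(3/2)^δ + (1/2)^δ. -/
/-! With `x = 3 ^ (δ - 1) ∈ (0, 1)` and `p = logb 3 5`, the inequality is `9 x - 5 x ^ p < 4` after
dividing by `(1/2) ^ δ`. Bernoulli's inequality `x ^ p ≥ 1 + p (x - 1)` (valid as `p ≥ 1`) turns the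
left side into at most `4 + (9 - 5 p) (x - 1)`, and `9 - 5 p > 0` because `5 ^ 5 < 3 ^ 9`. -/

open Real

lemma rpow_rpow_logb {a b : ℝ} (ha : 0 < a) (ha₁ : a ≠ 1) (hb : 0 < b) (s : ℝ) :
    (a ^ s) ^ logb a b = b ^ s := by
  rw [← rpow_mul ha.le, mul_comm, rpow_mul ha.le, rpow_logb ha ha₁ hb]

lemma one_le_logb_three_five : 1 ≤ logb 3 5 := by
  rw [le_logb_iff_rpow_le (by norm_num) (by norm_num)]
  norm_num

lemma logb_three_five_lt : logb 3 5 < 9 / 5 := by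
  have h : 5 * log 5 < 9 * log 3 := by
    have := log_lt_log (by norm_num) (by norm_num : (5 : ℝ) ^ 5 < 3 ^ 9)
    rwa [log_pow, log_pow, Nat.cast_ofNat, Nat.cast_ofNat] at this
  rw [logb, div_lt_iff₀ (log_pos (by norm_num))]
  linarith

lemma three_mul_three_rpow_sub_five_rpow_lt {t : ℝ} (ht : t < 1) : 3 * (3 : ℝ) ^ t - 5 ^ t < 4 := by
  set x : ℝ := 3 ^ (t - 1) with hx
  have hx₀ : 0 < x := rpow_pos_of_pos (by norm_num) _
  have hx₁ : x < 1 := rpow_lt_one_of_one_lt_of_neg (by norm_num) (by linarith)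
  have h3 : (3 : ℝ) ^ t = 3 * x := by
    rw [hx, rpow_sub_one (by norm_num)]; ring
  have h5 : (5 : ℝ) ^ t = 5 * x ^ logb 3 5 := by
    rw [hx, rpow_rpow_logb (by norm_num) (by norm_num) (by norm_num), rpow_sub_one (by norm_num)]
    ring
  have bernoulli : 1 + logb 3 5 * (x - 1) ≤ x ^ logb 3 5 := by
    simpa using one_add_mul_self_le_rpow_one_add (by linarith : -1 ≤ x - 1) one_le_logb_three_five
  have hgap : 0 < (9 - 5 * logb 3 5) * (1 - x) :=
    mul_pos (by linarith [logb_three_five_lt]) (by linarith)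
  rw [h3, h5]
  nlinarith

theorem stmt_3_general (δ : ℝ) (h1 : δ < 1) :
    -(1/2 : ℝ) ^ δ + ((3/2 : ℝ) ^ δ - 2 * (1/2 : ℝ) ^ δ)
      - ((5/2 : ℝ) ^ δ - 2 * (3/2 : ℝ) ^ δ + (1/2 : ℝ) ^ δ) < 0 := by
  have hc : 0 < (1/2 : ℝ) ^ δ := rpow_pos_of_pos (by norm_num) δ
  have hsplit : ∀ a : ℝ, 0 ≤ a → (a / 2) ^ δ = a ^ δ * (1/2 : ℝ) ^ δ := fun a ha => by
    rw [div_eq_mul_one_div, mul_rpow ha (by norm_num)]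
  rw [hsplit 3 (by norm_num), hsplit 5 (by norm_num)]
  have hkey := three_mul_three_rpow_sub_five_rpow_lt h1
  nlinarith

theorem stmt_3 (δ : ℝ) (h0 : 0 < δ) (h1 : δ < 1) :
    -(1/2 : ℝ) ^ δ + ((3/2 : ℝ) ^ δ - 2 * (1/2 : ℝ) ^ δ)
      - ((5/2 : ℝ) ^ δ - 2 * (3/2 : ℝ) ^ δ + (1/2 : ℝ) ^ δ) < 0 :=
  stmt_3_general δ h1
end

section
/- For all δ ∈ (0,1), the function h(δ) := -(7/2)^δ + 4(5/2)^δ - 6(3/2)^δ + 5(1/2)^δ satisfies h(δ) > 0. -/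
/-!
Multiplying by `2 ^ δ` turns the claim into `0 < g δ` for
`g t = -7 ^ t + 4 * 5 ^ t - 6 * 3 ^ t + 5` (`scaledGap` below), which vanishes at `t = 1`, so it
suffices that `g` is strictly decreasing on `(-∞, 1]`. Up to the positive factor `5 ^ t`, `-g' t` is
`φ t - 4 log 5` with `φ t = log 7 * (7/5) ^ t + 6 log 3 * (3/5) ^ t`. The function `φ` is convex
with `φ' 1 ≤ 0`, so its tangent at `1` gives `φ t ≥ φ 1` for `t ≤ 1`, and
`φ 1 > 4 log 5` is the integer inequality `5 ^ 20 < 3 ^ 18 * 7 ^ 7`.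
-/

open Real Set

lemma Real.mul_one_add_mul_log_le_rpow {x : ℝ} (hx : 0 < x) (t : ℝ) :
    x * (1 + (t - 1) * log x) ≤ x ^ t := by
  have hsplit : x ^ t = x * exp ((t - 1) * log x) := by
    rw [rpow_def_of_pos hx, show log x * t = log x + (t - 1) * log x by ring, exp_add,
      exp_log hx]
  rw [hsplit]
  gcongr
  linarith [add_one_le_exp ((t - 1) * log x)]

lemma twenty_mul_log_five_lt : 20 * log 5 < 18 * log 3 + 7 * log 7 := by
  have hpow : (5 : ℝ) ^ 20 < 3 ^ 18 * 7 ^ 7 := by norm_num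
  have := log_lt_log (by positivity) hpow
  rwa [log_mul (by positivity) (by positivity), log_pow, log_pow, log_pow] at this

lemma seven_mul_log_seven_mul_sub_le :
    7 * log 7 * (log 7 - log 5) ≤ 18 * log 3 * (log 5 - log 3) := by
  have hlog3 : 1 < log 3 := by
    rw [lt_log_iff_exp_lt (by norm_num)]
    exact exp_one_lt_three
  have hlog7 : log 7 < 2 := by
    rw [log_lt_iff_lt_exp (by norm_num), show (2 : ℝ) = 1 + 1 by norm_num, exp_add]
    nlinarith [exp_one_gt_d9]
  have h75 : log 7 - log 5 ≤ 2 / 5 := by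
    have := log_le_sub_one_of_pos (show (0 : ℝ) < 7 / 5 by norm_num)
    rw [log_div (by norm_num) (by norm_num)] at this
    linarith
  have h35 : 2 / 5 ≤ log 5 - log 3 := by
    have := log_le_sub_one_of_pos (show (0 : ℝ) < 3 / 5 by norm_num)
    rw [log_div (by norm_num) (by norm_num)] at this
    linarith
  have hlog7_pos : 0 < log 7 := log_pos (by norm_num)
  have hlog75 : 0 ≤ log 7 - log 5 := sub_nonneg.2 (log_le_log (by norm_num) (by norm_num))
  calc 7 * log 7 * (log 7 - log 5) ≤ 7 * 2 * (2 / 5) := by gcongr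
    _ ≤ 18 * 1 * (2 / 5) := by norm_num
    _ ≤ 18 * log 3 * (log 5 - log 3) := by gcongr

noncomputable def scaledGap (t : ℝ) : ℝ := -(7 : ℝ) ^ t + 4 * (5 : ℝ) ^ t - 6 * (3 : ℝ) ^ t + 5

lemma scaledGap_one : scaledGap 1 = 0 := by
  norm_num [scaledGap]

lemma hasDerivAt_scaledGap (t : ℝ) :
    HasDerivAt scaledGap
      (-((7 : ℝ) ^ t * log 7) + 4 * ((5 : ℝ) ^ t * log 5) - 6 * ((3 : ℝ) ^ t * log 3)) t := by
  have hderiv (a : ℝ) (ha : 0 < a) := (hasStrictDerivAt_const_rpow ha t).hasDerivAt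
  exact ((((hderiv 7 (by norm_num)).neg.add ((hderiv 5 (by norm_num)).const_mul 4)).sub
    ((hderiv 3 (by norm_num)).const_mul 6)).add_const 5)

lemma deriv_scaledGap_neg {t : ℝ} (ht : t ≤ 1) : deriv scaledGap t < 0 := by
  rw [(hasDerivAt_scaledGap t).deriv]
  have hsplit (a : ℝ) (ha : 0 ≤ a) : a ^ t = (a / 5) ^ t * (5 : ℝ) ^ t := by
    rw [← mul_rpow (by positivity) (by norm_num), div_mul_cancel₀ _ (by norm_num)]
  have h7 := mul_one_add_mul_log_le_rpow (show (0 : ℝ) < 7 / 5 by norm_num) t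
  have h3 := mul_one_add_mul_log_le_rpow (show (0 : ℝ) < 3 / 5 by norm_num) t
  rw [log_div (by norm_num) (by norm_num)] at h7 h3
  have hφ : 4 * log 5 < log 7 * (7 / 5) ^ t + 6 * log 3 * (3 / 5) ^ t := by
    have hslope := mul_nonneg (sub_nonneg.2 ht) (sub_nonneg.2 seven_mul_log_seven_mul_sub_le)
    have : 0 < log 3 := log_pos (by norm_num)
    have : 0 < log 7 := log_pos (by norm_num)
    calc 4 * log 5
        < (7 * log 7 + 18 * log 3) / 5 := by linarith [twenty_mul_log_five_lt]
      _ ≤ (7 * log 7 + 18 * log 3) / 5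
          + (1 - t) * (18 * log 3 * (log 5 - log 3) - 7 * log 7 * (log 7 - log 5)) / 5 := by
        linarith
      _ = log 7 * (7 / 5 * (1 + (t - 1) * (log 7 - log 5)))
          + 6 * log 3 * (3 / 5 * (1 + (t - 1) * (log 3 - log 5))) := by ring
      _ ≤ log 7 * (7 / 5) ^ t + 6 * log 3 * (3 / 5) ^ t := by gcongr
  rw [hsplit 7 (by norm_num), hsplit 3 (by norm_num)]
  nlinarith [rpow_pos_of_pos (show (0 : ℝ) < 5 by norm_num) t]

lemma strictAntiOn_scaledGap : StrictAntiOn scaledGap (Iic 1) := by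
  refine strictAntiOn_of_deriv_neg (convex_Iic 1)
    (fun t _ => (hasDerivAt_scaledGap t).continuousAt.continuousWithinAt) fun t ht => ?_
  rw [interior_Iic] at ht
  exact deriv_scaledGap_neg ht.le

theorem stmt_6_general (δ : ℝ) (h1 : δ < 1) :
    0 < -(7/2 : ℝ) ^ δ + 4 * (5/2 : ℝ) ^ δ - 6 * (3/2 : ℝ) ^ δ + 5 * (1/2 : ℝ) ^ δ := by
  have hgap : 0 < scaledGap δ :=
    scaledGap_one ▸ strictAntiOn_scaledGap (mem_Iic.2 h1.le) (mem_Iic.2 le_rfl) h1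
  have hscale : -(7/2 : ℝ) ^ δ + 4 * (5/2 : ℝ) ^ δ - 6 * (3/2 : ℝ) ^ δ + 5 * (1/2 : ℝ) ^ δ
      = scaledGap δ / 2 ^ δ := by
    simp only [scaledGap, div_rpow (show (0 : ℝ) ≤ 7 by norm_num) zero_le_two,
      div_rpow (show (0 : ℝ) ≤ 5 by norm_num) zero_le_two,
      div_rpow (show (0 : ℝ) ≤ 3 by norm_num) zero_le_two, div_rpow zero_le_one zero_le_two,
      one_rpow]
    ring
  rw [hscale]
  exact div_pos hgap (rpow_pos_of_pos zero_lt_two δ)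

theorem stmt_6 (δ : ℝ) (h0 : 0 < δ) (h1 : δ < 1) :
    0 < -(7/2 : ℝ) ^ δ + 4 * (5/2 : ℝ) ^ δ - 6 * (3/2 : ℝ) ^ δ + 5 * (1/2 : ℝ) ^ δ :=
  stmt_6_general δ h1
end
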